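/- arXiv:1511.01819 — 5 statements merged into one kernel-verified Lean document; each statement's English description precedes it below -/
import Mathlib

section
/- Let R be an integral domain in which, for every nonzero finitely generated ideal I, every finitely generated ideal of the quotient ring R/I is principal. Then for any two invertible (fractional) ideals I and J of R, there is an isomorphism of R-modules I ⊕ J ≅ R ⊕ IJ. -/
/-!
Multiplying a fractional ideal by a nonzero element of the fraction field does not change its
isomorphism class, so it suffices to replace `J` by an integral ideal `b` and `I` by an integral
ideal `a` with `a + b = R`. Then `1 = e + f` with `e ∈ a`, `f ∈ b`, and
`(x, y) ↦ (x + y, f x - e y)` is an isomorphism `a ⊕ b ≅ R ⊕ ab`.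

To find `a`, write `I c = (r)` with `c` integral. As `c / cb` is principal in `R / cb`,
`c = (d) + cb`, and `a := (d / r) I` satisfies `(a + b) c = (d) + cb = c`, so `a + b = R`.
-/

open nonZeroDivisors

namespace Ideal

variable {R : Type*} [CommRing R]

def prodEquivProdMulOfAddEqOne {a b : Ideal R} {e f : R} (he : e ∈ a) (hf : f ∈ b)
    (hef : e + f = 1) : (a × b) ≃ₗ[R] R × ↥(a * b) where
  toFun p := ((p.1 : R) + p.2,
    ⟨f * p.1 - e * p.2, (a * b).sub_mem (mul_mem_mul_rev p.1.2 hf) (mul_mem_mul he p.2.2)⟩)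
  invFun q := (⟨e * q.1 + q.2, a.add_mem (a.mul_mem_right _ he) (Ideal.mul_le_left q.2.2)⟩,
    ⟨f * q.1 - q.2, b.sub_mem (b.mul_mem_right _ hf) (Ideal.mul_le_right q.2.2)⟩)
  map_add' p p' := by
    ext <;> simp only [Prod.fst_add, Prod.snd_add, Submodule.coe_add] <;> ring
  map_smul' r p := by
    ext <;> simp only [Prod.smul_fst, Prod.smul_snd, SetLike.val_smul, smul_eq_mul,
      RingHom.id_apply] <;> ring
  left_inv p := by
    ext
    · linear_combination (p.1 : R) * hef
    · linear_combination (p.2 : R) * hef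
  right_inv q := by
    ext
    · linear_combination q.1 * hef
    · linear_combination (q.2 : R) * hef

theorem nonempty_prod_linearEquiv_of_sup_eq_top {a b : Ideal R} (hab : a ⊔ b = ⊤) :
    Nonempty ((a × b) ≃ₗ[R] R × ↥(a * b)) := by
  obtain ⟨e, he, f, hf, hef⟩ := Submodule.mem_sup.mp (hab ▸ Submodule.mem_top : (1 : R) ∈ a ⊔ b)
  exact ⟨prodEquivProdMulOfAddEqOne he hf hef⟩

theorem exists_ne_zero_eq_span_singleton_sup {c n : Ideal R} (hnc : n ≤ c) (hn : n ≠ ⊥)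
    (hc : (c.map (Quotient.mk n)).IsPrincipal) : ∃ d ≠ 0, c = span {d} ⊔ n := by
  obtain ⟨g, hg⟩ := hc.principal
  obtain ⟨d, rfl⟩ := Quotient.mk_surjective g
  have hcd : c = span {d} ⊔ n := by
    have hmap : c.map (Quotient.mk n) = (span {d}).map (Quotient.mk n) := by
      rw [hg, map_span, Set.image_singleton, submodule_span_eq]
    rwa [map_eq_iff_sup_ker_eq_of_surjective _ Quotient.mk_surjective, mk_ker,
      sup_eq_left.mpr hnc] at hmap
  by_cases hd : d = 0
  · obtain ⟨e, he, he0⟩ := Submodule.exists_mem_ne_zero_of_ne_bot hn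
    refine ⟨e, he0, ?_⟩
    rw [hcd, hd, span_singleton_eq_bot.mpr rfl, bot_sup_eq,
      sup_eq_right.mpr ((span_singleton_le_iff_mem _).mpr he)]
  · exact ⟨d, hd, hcd⟩

end Ideal

namespace FractionalIdeal

section Localization

variable {R : Type*} [CommRing R] {S : Submonoid R} {P : Type*} [CommRing P] [Algebra R P]
  [IsLocalization S P]

theorem isUnit_spanSingleton {x : P} (hx : IsUnit x) : IsUnit (spanSingleton S x) :=
  .of_mul_eq_one (spanSingleton S ↑hx.unit⁻¹) <| by
    rw [spanSingleton_mul_spanSingleton, hx.mul_val_inv, spanSingleton_one]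

noncomputable def spanSingletonMulEquiv {x : P} (hx : IsUnit x) (I : FractionalIdeal S P) :
    (I : Submodule R P) ≃ₗ[R] ((spanSingleton S x * I : FractionalIdeal S P) : Submodule R P) :=
  (Submodule.equivMapOfInjective (LinearMap.mulLeft R x) hx.mul_right_injective I).trans
    (LinearEquiv.ofEq _ _ <| by
      ext; simp [coe_mul, coe_spanSingleton, Submodule.mem_span_singleton_mul])

theorem nonempty_linearEquiv_of_spanSingleton_mul_eq [FaithfulSMul R P] {x : P} (hx : IsUnit x)
    {I : FractionalIdeal S P} {a : Ideal R} (h : spanSingleton S x * I = a) :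
    Nonempty ((I : Submodule R P) ≃ₗ[R] a) :=
  ⟨(spanSingletonMulEquiv hx I).trans <| (LinearEquiv.ofEq _ _ (congrArg _ h)).trans
    (Submodule.equivMapOfInjective _ (FaithfulSMul.algebraMap_injective R P) a).symm⟩

end Localization

variable {R : Type*} [CommRing R] [IsDomain R] {K : Type*} [Field K] [Algebra R K]
  [IsFractionRing R K]

theorem exists_spanSingleton_mul_eq_coeIdeal (I : FractionalIdeal R⁰ K) :
    ∃ z ≠ (0 : K), ∃ c : Ideal R, spanSingleton R⁰ z * I = c := by
  obtain ⟨a, c, ha, rfl⟩ := exists_eq_spanSingleton_mul I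
  have ha' : algebraMap R K a ≠ 0 := (map_ne_zero_iff _ (IsFractionRing.injective R K)).mpr ha
  refine ⟨algebraMap R K a, ha', c, ?_⟩
  rw [← mul_assoc, spanSingleton_mul_spanSingleton, mul_inv_cancel₀ ha', spanSingleton_one,
    one_mul]

theorem exists_spanSingleton_mul_eq_coeIdeal_sup_eq_top
    (h : ∀ I : Ideal R, I ≠ ⊥ → I.FG → ∀ J : Ideal (R ⧸ I), J.FG → J.IsPrincipal)
    {I : FractionalIdeal R⁰ K} (hI : IsUnit I) {b : Ideal R}
    (hb : IsUnit (b : FractionalIdeal R⁰ K)) :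
    ∃ x ≠ (0 : K), ∃ a : Ideal R, spanSingleton R⁰ x * I = a ∧ a ⊔ b = ⊤ := by
  obtain ⟨I', hII'⟩ := hI.exists_right_inv
  obtain ⟨r, hr, c, hc⟩ := exists_spanSingleton_mul_eq_coeIdeal I'
  have hIc : I * c = spanSingleton R⁰ r := by rw [← hc, mul_left_comm, hII', mul_one]
  have hcu : IsUnit (c : FractionalIdeal R⁰ K) :=
    isUnit_of_mul_isUnit_right (hIc ▸ isUnit_spanSingleton hr.isUnit)
  have hcbu : IsUnit ((c * b : Ideal R) : FractionalIdeal R⁰ K) := by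
    rw [coeIdeal_mul]; exact hcu.mul hb
  have hcb : c * b ≠ ⊥ := coeIdeal_ne_zero.mp hcbu.ne_zero
  have hinj : Function.Injective (algebraMap R K) := IsFractionRing.injective R K
  obtain ⟨d, hd, hcd⟩ := Ideal.exists_ne_zero_eq_span_singleton_sup Ideal.mul_le_left hcb
    (h _ hcb (Ideal.fg_of_isUnit hinj _ hcbu) _ ((Ideal.fg_of_isUnit hinj c hcu).map _))
  have hAb : spanSingleton R⁰ (algebraMap R K d / r) * I + b = 1 := hcu.mul_right_cancel <| by
    rw [add_mul, mul_assoc, hIc, spanSingleton_mul_spanSingleton, div_mul_cancel₀ _ hr,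
      ← coeIdeal_span_singleton, ← coeIdeal_mul, mul_comm b, ← coeIdeal_sup, ← hcd, one_mul]
  obtain ⟨a, ha⟩ := le_one_iff_exists_coeIdeal.mp (hAb ▸ le_self_add)
  refine ⟨_, div_ne_zero ((map_ne_zero_iff _ hinj).mpr hd) hr, a, ha.symm,
    (coeIdeal_inj (K := K)).mp ?_⟩
  rw [coeIdeal_sup, coeIdeal_top, ha, hAb]

end FractionalIdeal

open FractionalIdeal in
/-- Kaplansky's theorem: if `R` is an integral domain such that for every nonzero
finitely generated ideal `I` every finitely generated ideal of `R ⧸ I` is principal,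
then for invertible fractional ideals `I`, `J` one has `I ⊕ J ≅ R ⊕ I*J`
as `R`-modules. -/
theorem invertible_ideal_sum_iso
    (R : Type*) [CommRing R] [IsDomain R]
    (h : ∀ I : Ideal R, I ≠ ⊥ → I.FG →
      ∀ J : Ideal (R ⧸ I), J.FG → J.IsPrincipal)
    (I J : FractionalIdeal R⁰ (FractionRing R))
    (hI : IsUnit I) (hJ : IsUnit J) :
    Nonempty ((↥(I : Submodule R (FractionRing R)) × ↥(J : Submodule R (FractionRing R)))
      ≃ₗ[R] (R × ↥((I * J : FractionalIdeal R⁰ (FractionRing R)) : Submodule R (FractionRing R)))) := by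
  obtain ⟨y, hy, b, hJb⟩ := exists_spanSingleton_mul_eq_coeIdeal J
  have hb : IsUnit (b : FractionalIdeal R⁰ (FractionRing R)) :=
    hJb ▸ (isUnit_spanSingleton hy.isUnit).mul hJ
  obtain ⟨x, hx, a, hIa, hab⟩ := exists_spanSingleton_mul_eq_coeIdeal_sup_eq_top h hI hb
  have hIJ : spanSingleton R⁰ (x * y) * (I * J) = (a * b : Ideal R) := by
    rw [coeIdeal_mul, ← hIa, ← hJb, ← spanSingleton_mul_spanSingleton]
    ring
  obtain ⟨eI⟩ := nonempty_linearEquiv_of_spanSingleton_mul_eq hx.isUnit hIa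
  obtain ⟨eJ⟩ := nonempty_linearEquiv_of_spanSingleton_mul_eq hy.isUnit hJb
  obtain ⟨eIJ⟩ := nonempty_linearEquiv_of_spanSingleton_mul_eq (mul_ne_zero hx hy).isUnit hIJ
  obtain ⟨e⟩ := Ideal.nonempty_prod_linearEquiv_of_sup_eq_top hab
  exact ⟨(eI.prodCongr eJ).trans (e.trans ((LinearEquiv.refl R R).prodCongr eIJ.symm))⟩
end

section
/- Every finitely generated projective module over a Bezout domain is free. -/
/-!
A finitely generated projective module is a direct summand of some `Rⁿ`, so it suffices that every
finitely generated `M` embedding into `Rⁿ` is free. Induct on `n`: the last coordinate maps `M`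
onto a finitely generated ideal, which is principal, hence free, so `M ≅ K × I` splits, where the
kernel `K` is finitely generated (a summand of `M`) and embeds into `Rⁿ⁻¹`.
-/

open LinearMap Submodule

section

variable {R M N : Type*} [CommRing R] [AddCommGroup M] [Module R M] [AddCommGroup N] [Module R N]

noncomputable def LinearMap.kerProdRangeEquiv (f : M →ₗ[R] N) [Module.Projective R (range f)] :
    M ≃ₗ[R] ker f × range f :=
  have hexact : Function.Exact (ker f).subtype f.rangeRestrict := by
    rw [LinearMap.exact_iff, ker_rangeRestrict, range_subtype]
  have hsplit := f.rangeRestrict.exists_rightInverse_of_surjective f.range_rangeRestrict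
  (hexact.splitSurjectiveEquiv (ker f).injective_subtype ⟨_, hsplit.choose_spec⟩).1

end

theorem Ideal.free_of_isPrincipal {R : Type*} [CommRing R] [IsDomain R] (I : Ideal R)
    [hI : I.IsPrincipal] : Module.Free R I := by
  obtain ⟨a, rfl⟩ := hI
  rcases eq_or_ne a 0 with rfl | ha
  · rw [Submodule.span_zero_singleton]
    infer_instance
  · exact Module.Free.of_equiv (LinearEquiv.toSpanNonzeroSingleton R R a ha)

theorem IsBezout.free_of_injective_pi {R : Type*} [CommRing R] [IsDomain R] [IsBezout R]
    {n : ℕ} {M : Type*} [AddCommGroup M] [Module R M] [Module.Finite R M]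
    (f : M →ₗ[R] Fin n → R) (hf : Function.Injective f) : Module.Free R M := by
  induction n generalizing M with
  | zero =>
    have := hf.subsingleton
    infer_instance
  | succ n ih =>
    let π := proj (Fin.last n) ∘ₗ f
    have : (range π).IsPrincipal :=
      IsBezout.isPrincipal_of_FG _ (Module.Finite.iff_fg.mp inferInstance)
    have : Module.Free R (range π) := Ideal.free_of_isPrincipal _
    let e := π.kerProdRangeEquiv
    have : Module.Finite R (ker π) :=
      Module.Finite.of_surjective (fst R _ _ ∘ₗ e.toLinearMap)
        (Prod.fst_surjective.comp e.surjective)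
    have hinit : Function.Injective (funLeft R R Fin.castSucc ∘ₗ f ∘ₗ (ker π).subtype) := by
      intro x y hxy
      refine Subtype.ext (hf ?_)
      have hlast : ∀ z : ker π, f z (Fin.last n) = 0 := fun z => z.2
      rw [← Fin.snoc_init_self (f x), ← Fin.snoc_init_self (f y), hlast, hlast]
      exact congrArg (Fin.snoc · 0) hxy
    have := ih _ hinit
    exact Module.Free.of_equiv e.symm

/-- Every finitely generated projective module over a Bezout domain is free. -/
theorem free_of_projective_over_bezout
    (R : Type*) [CommRing R] [IsDomain R] [IsBezout R]
    (M : Type*) [AddCommGroup M] [Module R M]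
    [Module.Finite R M] [Module.Projective R M] :
    Module.Free R M := by
  obtain ⟨n, -, f, -, hf, -⟩ := Module.Finite.exists_comp_eq_id_of_projective R M
  exact IsBezout.free_of_injective_pi f hf
end

section
/- Let A be an integral domain and I ⊆ A an invertible ideal. Then the ring homomorphism A → A_I := ⋃_{m ≥ 1} I^{-m} (union of the inverse fractional ideals inside the fraction field) is flat. -/
/-!
With `J = I⁻¹`, the algebra `A[J]` is the union of the powers `J ^ n`, and this union is
increasing because `1 = I * J ≤ J`. Each `J ^ n` is an invertible fractional ideal, hence a
projective and in particular flat `A`-module. Flatness passes to directed unions: a relation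
among finitely many elements of the union already lives in one `J ^ n`, where the equational
criterion shows it is trivial.
-/

open nonZeroDivisors

theorem Module.IsTrivialRelation.map {R M N ι : Type*} [CommRing R] [AddCommGroup M]
    [Module R M] [AddCommGroup N] [Module R N] [Fintype ι] {f : ι → R} {x : ι → M}
    (g : M →ₗ[R] N) (h : IsTrivialRelation f x) : IsTrivialRelation f (g ∘ x) := by
  obtain ⟨k, a, y, hxy, ha⟩ := h
  exact ⟨k, a, g ∘ y, fun i => by simp [hxy], ha⟩

theorem Module.Flat.iSup_of_directed {R M ι : Type*} [CommRing R] [AddCommGroup M] [Module R M]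
    [Nonempty ι] {p : ι → Submodule R M} (hp : Directed (· ≤ ·) p)
    (h : ∀ i, Module.Flat R (p i)) : Module.Flat R ↥(⨆ i, p i) := by
  refine of_forall_isTrivialRelation fun {l f x} hfx => ?_
  choose k hk using fun i => (Submodule.mem_iSup_of_directed p hp).mp (x i).2
  obtain ⟨j, hj⟩ := hp.finite_le k
  let x' : Fin l → p j := fun i => ⟨x i, hj i (hk i)⟩
  have hx' : ∑ i, f i • x' i = 0 := by
    apply Subtype.ext
    simpa [x'] using congrArg Subtype.val hfx
  exact (isTrivialRelation_of_sum_smul_eq_zero hx').map (Submodule.inclusion (le_iSup p j))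

theorem Submodule.iSup_pow_mul_le {R S : Type*} [CommSemiring R] [Semiring S] [Algebra R S]
    (P : Submodule R S) : (⨆ n : ℕ, P ^ n) * (⨆ n : ℕ, P ^ n) ≤ ⨆ n : ℕ, P ^ n := by
  rw [Submodule.iSup_mul]
  refine iSup_le fun m => ?_
  rw [Submodule.mul_iSup]
  exact iSup_le fun n => (pow_add P m n).symm ▸ le_iSup (P ^ ·) (m + n)

theorem Algebra.adjoin_toSubmodule_eq_iSup_pow {R S : Type*} [CommSemiring R] [Semiring S]
    [Algebra R S] (P : Submodule R S) :
    Subalgebra.toSubmodule (Algebra.adjoin R (P : Set S)) = ⨆ n : ℕ, P ^ n := by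
  apply le_antisymm
  · let T : Subalgebra R S := (⨆ n : ℕ, P ^ n).toSubalgebra
      (Submodule.one_le.mp (pow_zero P ▸ le_iSup (P ^ ·) 0))
      (fun _ _ hx hy => P.iSup_pow_mul_le (Submodule.mul_mem_mul hx hy))
    exact Algebra.adjoin_le (S := T) fun x hx =>
      show x ∈ ⨆ n : ℕ, P ^ n from (pow_one P ▸ le_iSup (P ^ ·) 1) hx
  · refine iSup_le fun n => ?_
    induction n with
    | zero => simp
    | succ n ih =>
      rw [pow_succ, Submodule.mul_le]
      exact fun x hx y hy =>
        (Algebra.adjoin R (P : Set S)).mul_mem (ih hx) (Algebra.subset_adjoin hy)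

theorem Submodule.flat_adjoin_of_isUnit {R S : Type*} [CommRing R] [Ring S] [Algebra R S]
    [FaithfulSMul R S] {P : Submodule R S} (hP : IsUnit P) (h1P : 1 ≤ P) :
    Module.Flat R (Algebra.adjoin R (P : Set S)) := by
  have hflat (n : ℕ) : Module.Flat R ↥(P ^ n) :=
    have := Submodule.projective_of_isUnit (hP.pow n); inferInstance
  have := Module.Flat.iSup_of_directed (pow_right_monotone h1P).directed_le hflat
  exact .of_linearEquiv (LinearEquiv.ofEq _ _ (Algebra.adjoin_toSubmodule_eq_iSup_pow P))

/-- Let `A` be an integral domain and `I ⊆ A` an invertible ideal.  Then the ring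
homomorphism `A → A_I := ⋃_{m ≥ 1} I^{-m}` (the subalgebra of the fraction field
generated by the inverse fractional ideal `I⁻¹`) is flat. -/
theorem flat_of_invert_ideal
    (A : Type*) [CommRing A] [IsDomain A]
    (I : Ideal A) (hI : IsUnit (I : FractionalIdeal A⁰ (FractionRing A))) :
    Module.Flat A
      (Algebra.adjoin A
        (((I : FractionalIdeal A⁰ (FractionRing A))⁻¹ :
            FractionalIdeal A⁰ (FractionRing A)) : Set (FractionRing A))) := by
  set J := (I : FractionalIdeal A⁰ (FractionRing A))⁻¹
  have hIJ : (I : FractionalIdeal A⁰ (FractionRing A)) * J = 1 :=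
    (FractionalIdeal.mul_inv_cancel_iff_isUnit _).mpr hI
  have h1J : 1 ≤ J := hIJ ▸ mul_le_of_le_one_left' FractionalIdeal.coeIdeal_le_one
  exact Submodule.flat_adjoin_of_isUnit
    ((IsUnit.of_mul_eq_one_right _ hIJ).map (FractionalIdeal.coeSubmoduleHom A⁰ _))
    (by simpa using FractionalIdeal.coe_le_coe.mpr h1J)
end

section
/- Let ψ : R → S be a continuous homomorphism of topological rings, M a finitely generated R-module equipped with the quotient topology from some surjection R^ℓ ↠ M, and N a finitely generated S-module equipped with the quotient topology from some surjection S^m ↠ N. Then every ψ-semilinear map α : M → N (i.e. α additive with α(rm) = ψ(r)α(m)) is continuous. -/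
/-!
Writing `x : R^ℓ` in the standard basis, a `ψ`-semilinear map out of `R^ℓ` sends `x` to
`∑ ψ(xᵢ) • f(eᵢ)`. Lifting each `f(eᵢ)` through the surjection `S^m ↠ N` gives a lift
`R^ℓ → S^m` built from `ψ`, coordinates and the module operations, hence continuous; so
`α ∘ (R^ℓ ↠ M)` factors through the continuous quotient map onto `N`, and `α` is continuous
for the quotient topology on `M`.
-/

open Function

namespace LinearMap

variable {R S : Type*} [Semiring R] [Semiring S] {ψ : R →+* S}
  {ι : Type*} [Fintype ι] [DecidableEq ι] {N : Type*} [AddCommMonoid N] [Module S N]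

theorem semilinear_pi_apply_eq_sum_univ (f : (ι → R) →ₛₗ[ψ] N) (x : ι → R) :
    f x = ∑ i, ψ (x i) • f (Pi.single i 1) := by
  conv_lhs => rw [pi_eq_sum_univ' x, map_sum]
  simp only [map_smulₛₗ]

theorem exists_continuous_lift_of_pi [TopologicalSpace R] [TopologicalSpace S]
    (hψ : Continuous ψ) {P : Type*} [AddCommMonoid P] [Module S P] [TopologicalSpace P]
    [ContinuousAdd P] [ContinuousSMul S P] (f : (ι → R) →ₛₗ[ψ] N) (q : P →ₗ[S] N)
    (hq : Surjective q) : ∃ F : (ι → R) → P, Continuous F ∧ ⇑f = q ∘ F := by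
  choose v hv using fun i => hq (f (Pi.single i 1))
  refine ⟨fun x => ∑ i, ψ (x i) • v i, ?_, ?_⟩
  · exact continuous_finsetSum _ fun i _ => (hψ.comp (continuous_apply i)).smul continuous_const
  · funext x
    simp [semilinear_pi_apply_eq_sum_univ f x, hv]

end LinearMap

theorem semilinear_continuous_general
    (R : Type*) [CommRing R] [TopologicalSpace R]
    (S : Type*) [CommRing S] [TopologicalSpace S] [IsTopologicalRing S]
    (ψ : R →+* S) (hψ : Continuous ψ)
    (M : Type*) [AddCommGroup M] [Module R M] [tM : TopologicalSpace M]
    (N : Type*) [AddCommGroup N] [Module S N] [tN : TopologicalSpace N]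
    (hM : ∃ (ℓ : ℕ) (q : (Fin ℓ → R) →ₗ[R] M),
      Function.Surjective q ∧ tM = TopologicalSpace.coinduced q inferInstance)
    (hN : ∃ (m : ℕ) (q : (Fin m → S) →ₗ[S] N),
      Function.Surjective q ∧ tN = TopologicalSpace.coinduced q inferInstance)
    (α : M → N)
    (hadd : ∀ x y : M, α (x + y) = α x + α y)
    (hsmul : ∀ (r : R) (m : M), α (r • m) = ψ r • α m) :
    Continuous α := by
  obtain ⟨ℓ, qM, -, rfl⟩ := hM
  obtain ⟨m, qN, hqN, htN⟩ := hN
  have hqN_cont : Continuous qN := by rw [htN]; exact continuous_coinduced_rng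
  let f : M →ₛₗ[ψ] N := { toFun := α, map_add' := hadd, map_smul' := hsmul }
  obtain ⟨F, hF, hfq⟩ := (f ∘ₛₗ qM).exists_continuous_lift_of_pi hψ qN hqN
  rw [continuous_coinduced_dom]
  change Continuous (f ∘ₛₗ qM)
  rw [hfq]
  exact hqN_cont.comp hF

/-- Let `ψ : R → S` be a continuous homomorphism of topological rings, `M` a
finitely generated `R`-module carrying the quotient topology from some surjection
`R^ℓ ↠ M`, and `N` a finitely generated `S`-module carrying the quotient topology
from some surjection `S^m ↠ N`.  Then every `ψ`-semilinear map `α : M → N` is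
continuous. -/
theorem semilinear_continuous
    (R : Type*) [CommRing R] [TopologicalSpace R] [IsTopologicalRing R]
    (S : Type*) [CommRing S] [TopologicalSpace S] [IsTopologicalRing S]
    (ψ : R →+* S) (hψ : Continuous ψ)
    (M : Type*) [AddCommGroup M] [Module R M] [tM : TopologicalSpace M]
    (N : Type*) [AddCommGroup N] [Module S N] [tN : TopologicalSpace N]
    (hM : ∃ (ℓ : ℕ) (q : (Fin ℓ → R) →ₗ[R] M),
      Function.Surjective q ∧ tM = TopologicalSpace.coinduced q inferInstance)
    (hN : ∃ (m : ℕ) (q : (Fin m → S) →ₗ[S] N),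
      Function.Surjective q ∧ tN = TopologicalSpace.coinduced q inferInstance)
    (α : M → N)
    (hadd : ∀ x y : M, α (x + y) = α x + α y)
    (hsmul : ∀ (r : R) (m : M), α (r • m) = ψ r • α m) :
    Continuous α :=
  semilinear_continuous_general R S ψ hψ M (tM := tM) N (tN := tN) hM hN α hadd hsmul
end

section
/- Let K be a complete nonarchimedean field of characteristic zero containing Q_p with |p| = p^{-1}. The ring E_K of formal Laurent series F(Z) = Σ_{n∈Z} a_n Z^n with a_n ∈ K, sup_n |a_n| < ∞ and a_n → 0 as n → -∞, equipped with ‖F‖ = sup_{n∈Z} |a_n|, is a normed ring whose norm is multiplicative: ‖FG‖ = ‖F‖·‖G‖ for all F, G. -/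
/-!
The upper bound is the ultrametric inequality. For the lower bound fix `i₁`, `j₁` and
`0 < c < ‖f i₁‖ * ‖g j₁‖`. The suprema of `‖f‖` and `‖g‖` need not be attained, so we weight the
coefficients by `ρ ^ i` with `ρ < 1` close to `1`. On a window `[L, ∞)`, outside of which the
coefficients are below `c / (A + B)`, the weighted sequences tend to `0` and have a *last*
maximiser `i₀`, resp. `j₀`. Taking the last one breaks ties: `f i₀ * g j₀` strictly dominates every
other term of the Cauchy sum at `n = i₀ + j₀`, so its norm is `‖f i₀‖ * ‖g j₀‖ > c`.
-/

open Filter Topology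

section Ultrametric

variable {ι M : Type*} [NormedAddCommGroup M] [IsUltrametricDist M]

theorem exists_norm_tsum_le [Nonempty ι] (s : ι → M) : ∃ i, ‖∑' i, s i‖ ≤ ‖s i‖ := by
  by_cases hs : Summable s
  swap
  · simp [tsum_eq_zero_of_not_summable hs]
  rcases (norm_nonneg (∑' i, s i)).eq_or_lt with h0 | hpos
  · exact ⟨Classical.arbitrary ι, h0 ▸ norm_nonneg _⟩
  obtain ⟨u, hu⟩ : ∃ u : Finset ι, ‖∑ i ∈ u, s i - ∑' i, s i‖ < ‖∑' i, s i‖ :=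
    ((tendsto_iff_norm_sub_tendsto_zero.1 hs.hasSum).eventually (gt_mem_nhds hpos)).exists
  have hmax : ‖∑ i ∈ u, s i + -∑' i, s i‖ < max ‖∑ i ∈ u, s i‖ ‖-∑' i, s i‖ := by
    rw [← sub_eq_add_neg, norm_neg]
    exact hu.trans_le (le_max_right _ _)
  have hnorm : ‖∑ i ∈ u, s i‖ = ‖∑' i, s i‖ :=
    (IsUltrametricDist.norm_eq_of_add_norm_lt_max hmax).trans (norm_neg _)
  obtain ⟨i, -, hi⟩ := IsUltrametricDist.exists_norm_finsetSum_le u s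
  exact ⟨i, hnorm ▸ hi⟩

theorem norm_tsum_eq_of_norm_lt {s : ι → M} (hs : Summable s) {i₀ : ι}
    (h : ∀ i ≠ i₀, ‖s i‖ < ‖s i₀‖) : ‖∑' i, s i‖ = ‖s i₀‖ := by
  classical
  have : Nonempty ι := ⟨i₀⟩
  rw [hs.tsum_eq_add_tsum_ite i₀]
  obtain ⟨i, hi⟩ := exists_norm_tsum_le fun i => if i = i₀ then 0 else s i
  by_cases hii : i = i₀
  · rw [if_pos hii, norm_zero, norm_le_zero_iff] at hi
    rw [hi, add_zero]
  · rw [if_neg hii] at hi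
    rw [IsUltrametricDist.norm_add_eq_max_of_norm_ne_norm (hi.trans_lt (h i hii)).ne',
      max_eq_left (hi.trans (h i hii).le)]

end Ultrametric

theorem tendsto_zpow_atTop_nhds_zero_of_lt_one {ρ : ℝ} (h0 : 0 ≤ ρ) (h1 : ρ < 1) :
    Tendsto (fun i : ℤ => ρ ^ i) atTop (𝓝 0) := by
  have htoNat : Tendsto Int.toNat atTop atTop :=
    tendsto_atTop_atTop.2 fun b => ⟨b, fun i hi => by omega⟩
  refine ((tendsto_pow_atTop_nhds_zero_of_lt_one h0 h1).comp htoNat).congr' ?_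
  filter_upwards [eventually_ge_atTop 0] with i hi
  rw [Function.comp_apply, ← zpow_natCast, Int.toNat_of_nonneg hi]

theorem exists_mem_Ioo_lt_mul_zpow {c P : ℝ} (hcP : c < P) (k : ℤ) :
    ∃ ρ ∈ Set.Ioo (0 : ℝ) 1, c < P * ρ ^ k := by
  have hcont : Tendsto (fun ρ : ℝ => P * ρ ^ k) (𝓝[<] 1) (𝓝 (P * 1 ^ k)) :=
    ((continuousAt_zpow₀ (1 : ℝ) k (Or.inl one_ne_zero)).tendsto.const_mul P).mono_left
      nhdsWithin_le_nhds
  rw [one_zpow, mul_one] at hcont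
  have hIoo : ∀ᶠ ρ in 𝓝[<] (1 : ℝ), ρ ∈ Set.Ioo 0 1 := Ioo_mem_nhdsLT zero_lt_one
  exact (hIoo.and (hcont.eventually (lt_mem_nhds hcP))).exists

structure IsLastMaxFrom (a : ℤ → ℝ) (L i₀ : ℤ) : Prop where
  le_index : L ≤ i₀
  le : ∀ i, L ≤ i → a i ≤ a i₀
  lt : ∀ i, i₀ < i → a i < a i₀

namespace IsLastMaxFrom

theorem exists_of_tendsto {a : ℤ → ℝ} (ha : Tendsto a atTop (𝓝 0)) {L i₁ : ℤ} (hL : L ≤ i₁)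
    (hpos : 0 < a i₁) : ∃ i₀, IsLastMaxFrom a L i₀ := by
  obtain ⟨R, hR⟩ := eventually_atTop.1 (ha.eventually (gt_mem_nhds hpos))
  have hi₁R : i₁ ≤ R := le_of_not_gt fun h => (hR i₁ h.le).false
  obtain ⟨m, hmIcc, hm⟩ := (Finset.Icc L R).exists_max_image a ⟨i₁, Finset.mem_Icc.2 ⟨hL, hi₁R⟩⟩
  have hmL : ∀ i, L ≤ i → a i ≤ a m := fun i hi => by
    rcases le_or_gt i R with hiR | hRi
    · exact hm i (Finset.mem_Icc.2 ⟨hi, hiR⟩)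
    · exact (hR i hRi.le).le.trans (hm i₁ (Finset.mem_Icc.2 ⟨hL, hi₁R⟩))
  obtain ⟨i₀, ⟨hi₀L, hi₀⟩, hlast⟩ := Int.exists_greatest_of_bdd
    (P := fun i => L ≤ i ∧ ∀ j, L ≤ j → a j ≤ a i)
    ⟨R, fun i hi => le_of_not_gt fun hRi => ((hR i hRi.le).trans_le (hi.2 i₁ hL)).false⟩
    ⟨m, (Finset.mem_Icc.1 hmIcc).1, hmL⟩
  refine ⟨i₀, hi₀L, hi₀, fun i hi => lt_of_not_ge fun hle => hi.not_ge ?_⟩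
  exact hlast i ⟨hi₀L.trans hi.le, fun j hj => (hi₀ j hj).trans hle⟩

theorem pos {a : ℤ → ℝ} {L i₀ : ℤ} (h : IsLastMaxFrom a L i₀) (ha : ∀ i, 0 ≤ a i) : 0 < a i₀ :=
  (ha (i₀ + 1)).trans_lt (h.lt _ (lt_add_one i₀))

theorem mul_lt {F G : ℤ → ℝ} {L i₀ j₀ i : ℤ} (hF : IsLastMaxFrom F L i₀)
    (hG : IsLastMaxFrom G L j₀) (hF0 : ∀ i, 0 ≤ F i) (hG0 : ∀ j, 0 ≤ G j) (hi : L ≤ i)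
    (hj : L ≤ i₀ + j₀ - i) (hne : i ≠ i₀) : F i * G (i₀ + j₀ - i) < F i₀ * G j₀ := by
  rcases hne.lt_or_gt with hlt | hgt
  · exact mul_lt_mul' (hF.le i hi) (hG.lt _ (by omega)) (hG0 _) (hF.pos hF0)
  · calc F i * G (i₀ + j₀ - i) ≤ F i * G j₀ := mul_le_mul_of_nonneg_left (hG.le _ hj) (hF0 i)
      _ < F i₀ * G j₀ := mul_lt_mul_of_pos_right (hF.lt i hgt) (hG.pos hG0)

end IsLastMaxFrom

theorem mul_zpow_sub_le_of_mul_zpow_le {a b ρ : ℝ} {i j L : ℤ} (hb : 0 ≤ b) (hρ0 : 0 < ρ)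
    (hρ1 : ρ ≤ 1) (hLj : L ≤ j) (h : a * ρ ^ i ≤ b * ρ ^ j) : a * ρ ^ (i - L) ≤ b :=
  calc a * ρ ^ (i - L) = a * ρ ^ i / ρ ^ L := by rw [zpow_sub₀ hρ0.ne']; ring
    _ ≤ b * ρ ^ j / ρ ^ L := by gcongr
    _ = b * ρ ^ (j - L) := by rw [zpow_sub₀ hρ0.ne']; ring
    _ ≤ b := mul_le_of_le_one_right hb (zpow_le_one₀ hρ0 hρ1 (by omega))

theorem exists_isLastMaxFrom_norm_mul_zpow {E : Type*} [SeminormedAddGroup E] {f : ℤ → E}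
    {A ρ : ℝ} (hfA : ∀ i, ‖f i‖ ≤ A) (hρ0 : 0 < ρ) (hρ1 : ρ < 1) {L i₁ : ℤ} (hL : L ≤ i₁)
    (hf₁ : 0 < ‖f i₁‖) :
    ∃ i₀, IsLastMaxFrom (fun i => ‖f i‖ * ρ ^ i) L i₀ ∧ ‖f i₁‖ * ρ ^ (i₁ - L) ≤ ‖f i₀‖ := by
  have hlim : Tendsto (fun i => ‖f i‖ * ρ ^ i) atTop (𝓝 0) := by
    refine squeeze_zero (fun i => by positivity)
      (fun i => mul_le_mul_of_nonneg_right (hfA i) (zpow_pos hρ0 i).le) ?_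
    simpa using (tendsto_zpow_atTop_nhds_zero_of_lt_one hρ0.le hρ1).const_mul A
  obtain ⟨i₀, hi₀⟩ := IsLastMaxFrom.exists_of_tendsto hlim hL (by positivity)
  exact ⟨i₀, hi₀, mul_zpow_sub_le_of_mul_zpow_le (norm_nonneg _) hρ0 hρ1.le hi₀.le_index
    (hi₀.le i₁ hL)⟩

theorem norm_mul_norm_lt_of_isLastMaxFrom {E : Type*} [SeminormedAddGroup E] {f g : ℤ → E}
    {ρ : ℝ} (hρ0 : 0 < ρ) {L i₀ j₀ i : ℤ} (hF : IsLastMaxFrom (fun i => ‖f i‖ * ρ ^ i) L i₀)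
    (hG : IsLastMaxFrom (fun j => ‖g j‖ * ρ ^ j) L j₀) (hi : L ≤ i) (hj : L ≤ i₀ + j₀ - i)
    (hne : i ≠ i₀) : ‖f i‖ * ‖g (i₀ + j₀ - i)‖ < ‖f i₀‖ * ‖g j₀‖ := by
  have hρmul : ∀ (k l : ℤ) (a b : ℝ), a * ρ ^ k * (b * ρ ^ l) = a * b * ρ ^ (k + l) := by
    intros; rw [zpow_add₀ hρ0.ne']; ring
  have h := hF.mul_lt hG (fun _ => by positivity) (fun _ => by positivity) hi hj hne
  rw [hρmul, hρmul, add_sub_cancel] at h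
  exact lt_of_mul_lt_mul_right h (zpow_pos hρ0 _).le

section CauchyProduct

variable {K : Type*} [NormedDivisionRing K] [IsUltrametricDist K] {f g : ℤ → K} {A B : ℝ}

theorem summable_mul_sub [CompleteSpace K] (hfA : ∀ i, ‖f i‖ ≤ A) (hgB : ∀ j, ‖g j‖ ≤ B)
    (hf0 : Tendsto f atBot (𝓝 0)) (hg0 : Tendsto g atBot (𝓝 0))
    (n : ℤ) : Summable fun i => f i * g (n - i) := by
  refine NonarchimedeanAddGroup.summable_of_tendsto_cofinite_zero ?_
  rw [Int.cofinite_eq, tendsto_sup]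
  constructor
  · refine squeeze_zero_norm (fun i => ?_) (by simpa using hf0.norm.mul_const B)
    rw [norm_mul]
    exact mul_le_mul_of_nonneg_left (hgB _) (norm_nonneg _)
  · have hsub : Tendsto (fun i : ℤ => n - i) atTop atBot :=
      tendsto_atTop_atBot.2 fun b => ⟨n - b, fun i hi => by omega⟩
    refine squeeze_zero_norm (fun i => ?_) (by simpa using (hg0.norm.comp hsub).const_mul A)
    rw [norm_mul]
    exact mul_le_mul_of_nonneg_right (hfA _) (norm_nonneg _)

theorem norm_tsum_mul_sub_le (hfA : ∀ i, ‖f i‖ ≤ A) (hgB : ∀ j, ‖g j‖ ≤ B) (n : ℤ) :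
    ‖∑' i, f i * g (n - i)‖ ≤ A * B := by
  have hA : 0 ≤ A := (norm_nonneg _).trans (hfA 0)
  refine IsUltrametricDist.norm_tsum_le_of_forall_le_of_nonneg
    (mul_nonneg hA ((norm_nonneg _).trans (hgB 0))) fun i => ?_
  rw [norm_mul]
  exact mul_le_mul (hfA i) (hgB _) (norm_nonneg _) hA

theorem exists_lt_norm_tsum_mul_sub [CompleteSpace K] (hfA : ∀ i, ‖f i‖ ≤ A)
    (hgB : ∀ j, ‖g j‖ ≤ B) (hf0 : Tendsto f atBot (𝓝 0)) (hg0 : Tendsto g atBot (𝓝 0))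
    {c : ℝ} (hc : 0 < c) {i₁ j₁ : ℤ} (hcP : c < ‖f i₁‖ * ‖g j₁‖) :
    ∃ n, c < ‖∑' i, f i * g (n - i)‖ := by
  have hP : 0 < ‖f i₁‖ * ‖g j₁‖ := hc.trans hcP
  have hf₁ : 0 < ‖f i₁‖ := pos_of_mul_pos_left hP (norm_nonneg _)
  have hg₁ : 0 < ‖g j₁‖ := pos_of_mul_pos_right hP (norm_nonneg _)
  have hA : 0 < A := hf₁.trans_le (hfA i₁)
  have hB : 0 < B := hg₁.trans_le (hgB j₁)
  set κ := c / (A + B)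
  have hκ : 0 < κ := by positivity
  have hκAB : κ * (A + B) = c := div_mul_cancel₀ c (by positivity)
  obtain ⟨L₀, hL₀⟩ : ∃ L, ∀ i ≤ L, ‖f i‖ < κ ∧ ‖g i‖ < κ :=
    eventually_atBot.1 <|
      ((tendsto_zero_iff_norm_tendsto_zero.1 hf0).eventually (gt_mem_nhds hκ)).and
      ((tendsto_zero_iff_norm_tendsto_zero.1 hg0).eventually (gt_mem_nhds hκ))
  set L := min L₀ (min i₁ j₁)
  obtain ⟨ρ, ⟨hρ0, hρ1⟩, hρ⟩ := exists_mem_Ioo_lt_mul_zpow hcP ((i₁ - L) + (j₁ - L))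
  obtain ⟨i₀, hF, hfi₀⟩ :=
    exists_isLastMaxFrom_norm_mul_zpow hfA hρ0 hρ1 (by omega : L ≤ i₁) hf₁
  obtain ⟨j₀, hG, hgj₀⟩ :=
    exists_isLastMaxFrom_norm_mul_zpow hgB hρ0 hρ1 (by omega : L ≤ j₁) hg₁
  have hlead : c < ‖f i₀‖ * ‖g j₀‖ := hρ.trans_le <| by
    rw [zpow_add₀ hρ0.ne', mul_mul_mul_comm]
    exact mul_le_mul hfi₀ hgj₀ (by positivity) (norm_nonneg _)
  refine ⟨i₀ + j₀, ?_⟩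
  rw [norm_tsum_eq_of_norm_lt (summable_mul_sub hfA hgB hf0 hg0 _) fun i hi => ?_, norm_mul,
    add_sub_cancel_left]
  · exact hlead
  rw [norm_mul, norm_mul, add_sub_cancel_left]
  by_cases hiL : i < L
  · calc ‖f i‖ * ‖g (i₀ + j₀ - i)‖ ≤ κ * B :=
          mul_le_mul (hL₀ i (by omega)).1.le (hgB _) (norm_nonneg _) hκ.le
      _ ≤ c := by nlinarith
      _ < _ := hlead
  by_cases hjL : i₀ + j₀ - i < L
  · calc ‖f i‖ * ‖g (i₀ + j₀ - i)‖ ≤ A * κ :=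
          mul_le_mul (hfA i) (hL₀ _ (by omega)).2.le (norm_nonneg _) hA.le
      _ ≤ c := by nlinarith
      _ < _ := hlead
  exact norm_mul_norm_lt_of_isLastMaxFrom hρ0 hF hG (not_lt.1 hiL) (not_lt.1 hjL) hi

end CauchyProduct

theorem gauss_norm_multiplicative_general
    (K : Type*) [NontriviallyNormedField K]
    [IsUltrametricDist K] [CompleteSpace K]
    (f g : ℤ → K)
    (hfb : BddAbove (Set.range fun n => ‖f n‖))
    (hgb : BddAbove (Set.range fun n => ‖g n‖))
    (hf0 : Tendsto f atBot (nhds 0))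
    (hg0 : Tendsto g atBot (nhds 0)) :
    (⨆ n : ℤ, ‖∑' i : ℤ, f i * g (n - i)‖)
      = (⨆ n : ℤ, ‖f n‖) * (⨆ n : ℤ, ‖g n‖) := by
  have hfA : ∀ i, ‖f i‖ ≤ ⨆ n, ‖f n‖ := le_ciSup hfb
  have hgB : ∀ j, ‖g j‖ ≤ ⨆ n, ‖g n‖ := le_ciSup hgb
  have hupper := norm_tsum_mul_sub_le hfA hgB
  refine le_antisymm (ciSup_le hupper) ?_
  rw [Real.iSup_mul_of_nonneg ((norm_nonneg _).trans (hgB 0))]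
  refine ciSup_le fun i => ?_
  rw [Real.mul_iSup_of_nonneg (norm_nonneg _)]
  refine ciSup_le fun j => le_of_not_gt fun hlt => ?_
  obtain ⟨c, hSc, hcP⟩ := exists_between hlt
  obtain ⟨n, hn⟩ := exists_lt_norm_tsum_mul_sub hfA hgB hf0 hg0
    ((Real.iSup_nonneg fun _ => norm_nonneg _).trans_lt hSc) hcP
  exact (hn.trans_le (le_ciSup ⟨_, Set.forall_mem_range.2 hupper⟩ n)).not_gt hSc

/-- Let `K` be a complete nonarchimedean field of characteristic zero containing
`ℚ_p`.  On the ring of formal Laurent series `F(Z) = Σ_{n∈ℤ} a_n Z^n` with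
bounded coefficients tending to `0` as `n → -∞`, the Gauss norm
`‖F‖ = sup_n ‖a_n‖` is multiplicative: the coefficients of the Cauchy product
`h_n = Σ_i f_i g_{n-i}` satisfy `sup_n ‖h_n‖ = (sup_n ‖f_n‖) · (sup_n ‖g_n‖)`. -/
theorem gauss_norm_multiplicative
    (p : ℕ) [Fact p.Prime]
    (K : Type*) [NontriviallyNormedField K] [NormedAlgebra ℚ_[p] K]
    [IsUltrametricDist K] [CompleteSpace K] [CharZero K]
    (f g : ℤ → K)
    (hfb : BddAbove (Set.range fun n => ‖f n‖))
    (hgb : BddAbove (Set.range fun n => ‖g n‖))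
    (hf0 : Tendsto f atBot (nhds 0))
    (hg0 : Tendsto g atBot (nhds 0)) :
    (⨆ n : ℤ, ‖∑' i : ℤ, f i * g (n - i)‖)
      = (⨆ n : ℤ, ‖f n‖) * (⨆ n : ℤ, ‖g n‖) :=
  gauss_norm_multiplicative_general K f g hfb hgb hf0 hg0
end
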